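/- arXiv:0711.2998 — 9 statements merged into one kernel-verified Lean document; each statement's English description precedes it below -/
import Mathlib

section
/- If G is an (n,k)-generator, then the number of members of G of size at least p = ⌈n/k⌉ is at least k - r = n - (p-1)k, where r = pk - n. Moreover, if this number equals k - r exactly, then the members of G of size at least p are pairwise disjoint. -/
/-!
Call `T ⊆ [n]` a transversal of the members of `G` of size at least `p` if it meets each of
them. The complement of a transversal is a union of at most `k` members of `G`, none of
which meets `T`, so each has size at most `p - 1`; hence `n - |T| ≤ k (p - 1)`, i.e.
`|T| ≥ k - r`. Picking one point in every big member gives a transversal with at most as many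
points as there are big members; if two big members intersect, one common point serves both and
the transversal has strictly fewer points, which is impossible when there are only `k - r` of them.
-/

/-- A family `G` of nonempty subsets of `[n]` is an `(n,k)`-generator if every nonempty
subset of `[n]` is a disjoint union of at most `k` members of `G`. -/
def IsGenerator (n k : ℕ) (G : Finset (Finset (Fin n))) : Prop :=
  (∀ g ∈ G, g.Nonempty) ∧
  ∀ X : Finset (Fin n), X.Nonempty →
    ∃ S : Finset (Finset (Fin n)), S ⊆ G ∧ S.card ≤ k ∧
      (S : Set (Finset (Fin n))).Pairwise Disjoint ∧ X = S.sup id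

namespace Finset

variable {α : Type*} [DecidableEq α]

theorem exists_forall_not_disjoint_card_le {B : Finset (Finset α)}
    (hB : ∀ b ∈ B, b.Nonempty) :
    ∃ T : Finset α, (∀ b ∈ B, ¬Disjoint b T) ∧ #T ≤ #B := by
  choose f hf using hB
  refine ⟨B.attach.image fun b => f b.1 b.2, fun b hb => ?_, card_image_le.trans_eq card_attach⟩
  exact not_disjoint_iff.2 ⟨f b hb, hf b hb, mem_image_of_mem _ (mem_attach B ⟨b, hb⟩)⟩

theorem exists_forall_not_disjoint_card_lt {B : Finset (Finset α)}
    (hB : ∀ b ∈ B, b.Nonempty) {b₁ b₂ : Finset α} (h₁ : b₁ ∈ B) (h₂ : b₂ ∈ B) (hne : b₁ ≠ b₂)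
    (hmeet : ¬Disjoint b₁ b₂) :
    ∃ T : Finset α, (∀ b ∈ B, ¬Disjoint b T) ∧ #T < #B := by
  obtain ⟨x, hx₁, hx₂⟩ := not_disjoint_iff.1 hmeet
  obtain ⟨T, hT, hTcard⟩ := exists_forall_not_disjoint_card_le (B := (B.erase b₁).erase b₂)
    fun b hb => hB b (mem_of_mem_erase (mem_of_mem_erase hb))
  have hcard₁ := card_erase_add_one h₁
  have hcard₂ := card_erase_add_one (mem_erase.2 ⟨hne.symm, h₂⟩)
  refine ⟨insert x T, fun b hb => ?_, (card_insert_le x T).trans_lt (by omega)⟩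
  by_cases hb₁ : b = b₁
  · exact not_disjoint_iff.2 ⟨x, hb₁ ▸ hx₁, mem_insert_self x T⟩
  by_cases hb₂ : b = b₂
  · exact not_disjoint_iff.2 ⟨x, hb₂ ▸ hx₂, mem_insert_self x T⟩
  exact fun hdisj =>
    hT b (mem_erase.2 ⟨hb₂, mem_erase.2 ⟨hb₁, hb⟩⟩) (hdisj.mono_right (subset_insert x T))

end Finset

open Finset

theorem IsGenerator.card_sub_card_le_of_forall_not_disjoint {n k p : ℕ}
    {G : Finset (Finset (Fin n))} (hG : IsGenerator n k G) {T : Finset (Fin n)}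
    (hT : ∀ g ∈ G, p ≤ #g → ¬Disjoint g T) :
    n - #T ≤ k * (p - 1) := by
  have hcompl : #Tᶜ = n - #T := by rw [card_compl, Fintype.card_fin]
  rw [← hcompl]
  rcases Tᶜ.eq_empty_or_nonempty with hX | hX
  · simp [hX]
  obtain ⟨S, hSG, hSk, -, hXS⟩ := hG.2 _ hX
  have hsmall : ∀ s ∈ S, #s ≤ p - 1 := fun s hs => by
    have hsX : s ⊆ Tᶜ := hXS ▸ le_sup (f := id) hs
    have : ¬p ≤ #s := fun h => hT s (hSG hs) h (disjoint_compl_left.mono_left hsX)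
    omega
  calc #Tᶜ = #(S.biUnion id) := by rw [hXS, sup_eq_biUnion]
    _ ≤ ∑ s ∈ S, #s := card_biUnion_le
    _ ≤ #S * (p - 1) := sum_le_card_nsmul S _ _ hsmall
    _ ≤ k * (p - 1) := Nat.mul_le_mul_right _ hSk

theorem stmt5_general (n k p r : ℕ) (hn : 1 ≤ n)
    (hpr : n = p * k - r)
    (G : Finset (Finset (Fin n))) (hG : IsGenerator n k G) :
    k - r ≤ (G.filter fun g => p ≤ g.card).card ∧
    ((G.filter fun g => p ≤ g.card).card = k - r →
      ((G.filter fun g => p ≤ g.card) : Set (Finset (Fin n))).Pairwise Disjoint) := by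
  set B := G.filter fun g => p ≤ g.card
  have hp : 1 ≤ p := Nat.pos_of_ne_zero fun h => by simp [h] at hpr; omega
  have hkp : k * (p - 1) = p * k - k := by
    rw [Nat.mul_sub_one, mul_comm]
  have hkp' : k ≤ p * k := Nat.le_mul_of_pos_left k hp
  have hlower : ∀ T : Finset (Fin n), (∀ b ∈ B, ¬Disjoint b T) → k - r ≤ #T := fun T hT => by
    have := hG.card_sub_card_le_of_forall_not_disjoint fun g hg hgp => hT g (mem_filter.2 ⟨hg, hgp⟩)
    omega
  have hB : ∀ b ∈ B, b.Nonempty := fun b hb => hG.1 b (mem_filter.1 hb).1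
  obtain ⟨T, hT, hTB⟩ := exists_forall_not_disjoint_card_le hB
  refine ⟨(hlower T hT).trans hTB, fun hcard b₁ hb₁ b₂ hb₂ hne => ?_⟩
  by_contra hmeet
  obtain ⟨T', hT', hT'B⟩ := exists_forall_not_disjoint_card_lt hB hb₁ hb₂ hne hmeet
  have := hlower T' hT'
  omega

theorem stmt5 (n k p r : ℕ) (hk : 1 ≤ k) (hn : 1 ≤ n)
    (hpr : n = p * k - r) (hr : r < k)
    (G : Finset (Finset (Fin n))) (hG : IsGenerator n k G) :
    k - r ≤ (G.filter fun g => p ≤ g.card).card ∧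
    ((G.filter fun g => p ≤ g.card).card = k - r →
      ((G.filter fun g => p ≤ g.card) : Set (Finset (Fin n))).Pairwise Disjoint) :=
  stmt5_general n k p r hn hpr G hG
end

section
/- Let G be an (n,k)-generator of minimum size, let p = ⌈n/k⌉, and let z ∈ [n] satisfy |G(z)| ≥ 2^{p-1}, where G(z) = {g ∈ G : z ∈ g}. If the minimum size of an (n-1,k)-generator equals constr(n-1,k), then |G(z)| = 2^{p-1} and the minimum size of an (n,k)-generator equals constr(n,k). -/
/-- `p(n,k) = ⌈n/k⌉`. -/
def pCeil (n k : ℕ) : ℕ := (n + k - 1) / k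

/-- `constr(n,k) = r·(2^{p−1} − 1) + (k − r)·(2^p − 1)` with `r = pk − n`. -/
def constr (n k : ℕ) : ℕ :=
  (pCeil n k * k - n) * (2 ^ (pCeil n k - 1) - 1) +
    (k - (pCeil n k * k - n)) * (2 ^ pCeil n k - 1)

/-- the minimum size of an `(n,k)`-generator. -/
noncomputable def opt (n k : ℕ) : ℕ :=
  sInf {m | ∃ G : Finset (Finset (Fin n)), IsGenerator n k G ∧ G.card = m}


open Finset

lemma pCeil_mul_add {k q s : ℕ} (hs : 0 < s) (hsk : s ≤ k) : pCeil (k * q + s) k = q + 1 := by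
  rw [pCeil, show k * q + s + k - 1 = (s - 1) + k * (q + 1) by rw [mul_add]; omega,
    Nat.add_mul_div_left _ _ (by omega), Nat.div_eq_of_lt (by omega), zero_add]

lemma constr_mul_add_add {k q s : ℕ} (hk : 0 < k) (hsk : s ≤ k) :
    constr (k * q + s) k + k = (k + s) * 2 ^ q := by
  rcases Nat.eq_zero_or_pos s with rfl | hs
  · rcases q with _ | q
    · simp [constr, pCeil, Nat.div_eq_of_lt (Nat.sub_lt hk one_pos)]
    · rw [show k * (q + 1) + 0 = k * q + k by ring, constr_mul_add_add hk le_rfl]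
      ring
  · have hr : (q + 1) * k - (k * q + s) = k - s := by rw [add_one_mul, mul_comm]; omega
    have hpow : 1 ≤ 2 ^ q := Nat.one_le_two_pow
    rw [constr, pCeil_mul_add hs hsk, Nat.add_sub_cancel, hr, Nat.sub_sub_self hsk]
    zify [hsk, hpow, Nat.one_le_two_pow (n := q + 1)]
    ring

lemma constr_succ {k : ℕ} (hk : 0 < k) (m : ℕ) :
    constr (m + 1) k = constr m k + 2 ^ (pCeil (m + 1) k - 1) := by
  obtain ⟨q, s, hs, rfl⟩ : ∃ q s, s < k ∧ m = k * q + s :=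
    ⟨m / k, m % k, Nat.mod_lt m hk, (Nat.div_add_mod m k).symm⟩
  have hm := constr_mul_add_add (q := q) hk hs.le
  have hm1 := constr_mul_add_add (q := q) (s := s + 1) hk hs
  have hpow : (k + (s + 1)) * 2 ^ q = (k + s) * 2 ^ q + 2 ^ q := by ring
  rw [show k * q + s + 1 = k * q + (s + 1) from rfl, pCeil_mul_add s.succ_pos hs,
    Nat.add_sub_cancel]
  omega

def residueClass (n k j : ℕ) : Finset (Fin n) := {i | i.val % k = j}

def residueGenerator (n k : ℕ) : Finset (Finset (Fin n)) :=
  (range k).biUnion fun j => (residueClass n k j).powerset.erase ∅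

lemma isGenerator_residueGenerator {k : ℕ} (hk : 0 < k) (n : ℕ) :
    IsGenerator n k (residueGenerator n k) := by
  refine ⟨fun g hg => ?_, fun X _ => ?_⟩
  · simp only [residueGenerator, mem_biUnion, mem_erase] at hg
    obtain ⟨_, _, hg, _⟩ := hg
    exact nonempty_iff_ne_empty.mpr hg
  refine ⟨(X.image (·.val % k)).image fun j => X.filter (·.val % k = j), ?_, ?_, ?_, ?_⟩
  · simp only [subset_iff, mem_image, residueGenerator, mem_biUnion, mem_range, mem_erase,
      mem_powerset]
    rintro _ ⟨_, ⟨i, hi, rfl⟩, rfl⟩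
    refine ⟨i.val % k, Nat.mod_lt _ hk, ne_empty_of_mem (a := i) (by simp [hi]), ?_⟩
    intro x hx
    simp_all [residueClass]
  · calc _ ≤ #(X.image (·.val % k)) := card_image_le
      _ ≤ #(range k) := card_le_card fun j hj => by
          obtain ⟨i, _, rfl⟩ := mem_image.mp hj
          exact mem_range.mpr (Nat.mod_lt _ hk)
      _ = k := card_range k
  · simp only [Set.Pairwise, coe_image, Set.mem_image, mem_coe]
    rintro _ ⟨j₁, _, rfl⟩ _ ⟨j₂, _, rfl⟩ hne
    refine disjoint_filter.mpr fun x _ h₁ h₂ => hne ?_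
    rw [← h₁, h₂]
  · ext x
    simp only [mem_sup, mem_image, id, exists_exists_and_eq_and, mem_filter]
    exact ⟨fun hx => ⟨x, hx, hx, rfl⟩, fun ⟨_, _, hx, _⟩ => hx⟩

lemma card_residueClass {k j : ℕ} (hk : 0 < k) (hj : j < k) (n : ℕ) :
    #(residueClass n k j) = n / k + if j < n % k then 1 else 0 := by
  have hmap : (residueClass n k j).map Fin.valEmbedding = {i ∈ range n | i ≡ j [MOD k]} := by
    rw [← Nat.Iio_eq_range, ← Fin.map_valEmbedding_univ, filter_map]
    simp [residueClass, Nat.ModEq, Nat.mod_eq_of_lt hj]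
  rw [← card_map, hmap, ← Nat.count_eq_card_filter_range, Nat.count_modEq_card _ hk,
    Nat.mod_eq_of_lt hj]

lemma card_residueGenerator_add {k : ℕ} (n : ℕ) :
    #(residueGenerator n k) + k = ∑ j ∈ range k, 2 ^ #(residueClass n k j) := by
  have hdisj :
      (range k : Set ℕ).PairwiseDisjoint fun j => (residueClass n k j).powerset.erase ∅ := by
    intro j₁ _ j₂ _ hne
    refine disjoint_left.mpr fun g hg₁ hg₂ => ?_
    simp only [mem_erase, mem_powerset] at hg₁ hg₂
    obtain ⟨x, hx⟩ := nonempty_iff_ne_empty.mpr hg₁.1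
    have h₁ := hg₁.2 hx
    have h₂ := hg₂.2 hx
    simp only [residueClass, mem_filter] at h₁ h₂
    exact hne (h₁.2.symm.trans h₂.2)
  rw [residueGenerator, card_biUnion hdisj]
  simp only [card_erase_of_mem (empty_mem_powerset _), card_powerset]
  calc _ = ∑ j ∈ range k, (2 ^ #(residueClass n k j) - 1 + 1) := by
        rw [sum_add_distrib, sum_const, card_range, smul_eq_mul, mul_one]
    _ = _ := sum_congr rfl fun _ _ => Nat.sub_add_cancel Nat.one_le_two_pow

lemma card_residueGenerator {k : ℕ} (hk : 0 < k) (n : ℕ) :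
    #(residueGenerator n k) = constr n k := by
  have hconstr := constr_mul_add_add (q := n / k) hk (Nat.mod_lt n hk).le
  rw [Nat.div_add_mod] at hconstr
  have hterm : ∀ j ∈ range k, 2 ^ #(residueClass n k j) =
      2 ^ (n / k) + if j < n % k then 2 ^ (n / k) else 0 := by
    intro j hj
    rw [card_residueClass hk (mem_range.mp hj)]
    split_ifs <;> ring
  have hlow : {j ∈ range k | j < n % k} = range (n % k) := by
    ext j
    simp only [mem_filter, mem_range, and_iff_right_iff_imp]
    exact fun hj => hj.trans (Nat.mod_lt n hk)
  apply Nat.add_right_cancel (m := k)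
  rw [card_residueGenerator_add, hconstr, sum_congr rfl hterm, sum_add_distrib, sum_ite,
    sum_const_zero, sum_const, sum_const, card_range, hlow, card_range, smul_eq_mul,
    smul_eq_mul, add_zero, add_mul]

lemma opt_le_constr {k : ℕ} (hk : 0 < k) (n : ℕ) : opt n k ≤ constr n k :=
  Nat.sInf_le ⟨_, isGenerator_residueGenerator hk n, card_residueGenerator hk n⟩

section DeletePoint

variable {m : ℕ} (z : Fin (m + 1))

/-- `G - z`, transported to `Fin m` along `z.succAbove : Fin m ≃ [n] ∖ {z}`. -/
noncomputable def deletePoint (G : Finset (Finset (Fin (m + 1)))) : Finset (Finset (Fin m)) :=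
  {g ∈ G | z ∉ g}.image fun g => g.preimage z.succAbove Fin.succAbove_right_injective.injOn

lemma image_succAbove_preimage {g : Finset (Fin (m + 1))} (hz : z ∉ g) :
    (g.preimage z.succAbove Fin.succAbove_right_injective.injOn).image z.succAbove = g := by
  rw [image_preimage]
  exact filter_true_of_mem fun x hx => Fin.exists_succAbove_eq (by rintro rfl; exact hz hx)

lemma card_deletePoint (G : Finset (Finset (Fin (m + 1)))) :
    #(deletePoint z G) = #{g ∈ G | z ∉ g} := by
  refine card_image_of_injOn fun g₁ hg₁ g₂ hg₂ h => ?_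
  rw [coe_filter] at hg₁ hg₂
  rw [← image_succAbove_preimage z hg₁.2, ← image_succAbove_preimage z hg₂.2]
  exact congrArg _ h

lemma IsGenerator.deletePoint {k : ℕ} {G : Finset (Finset (Fin (m + 1)))}
    (hG : IsGenerator (m + 1) k G) : IsGenerator m k (deletePoint z G) := by
  refine ⟨?_, fun X hX => ?_⟩
  · simp only [_root_.deletePoint, mem_image, mem_filter]
    rintro _ ⟨g, ⟨hg, hz⟩, rfl⟩
    obtain ⟨x, hx⟩ := hG.1 g hg
    obtain ⟨y, rfl⟩ := Fin.exists_succAbove_eq (show x ≠ z by rintro rfl; exact hz hx)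
    exact ⟨y, mem_preimage.mpr hx⟩
  obtain ⟨S, hSG, hSk, hSdisj, hXS⟩ := hG.2 (X.image z.succAbove) (hX.image _)
  have hzS : ∀ g ∈ S, z ∉ g := fun g hg hzg => by
    have : z ∈ X.image z.succAbove := hXS ▸ mem_sup.mpr ⟨g, hg, hzg⟩
    obtain ⟨y, _, hy⟩ := mem_image.mp this
    exact Fin.succAbove_ne z y hy
  refine ⟨S.image fun g => g.preimage z.succAbove Fin.succAbove_right_injective.injOn,
    image_subset_image fun g hg => mem_filter.mpr ⟨hSG hg, hzS g hg⟩,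
    card_image_le.trans hSk, ?_, ?_⟩
  · simp only [Set.Pairwise, coe_image, Set.mem_image, mem_coe]
    rintro _ ⟨g₁, hg₁, rfl⟩ _ ⟨g₂, hg₂, rfl⟩ hne
    exact disjoint_left.mpr fun x h₁ h₂ => disjoint_left.mp
      (hSdisj hg₁ hg₂ fun h => hne (h ▸ rfl)) (mem_preimage.mp h₁) (mem_preimage.mp h₂)
  · ext x
    have hx : x ∈ X ↔ z.succAbove x ∈ S.sup id := by
      rw [← hXS, Fin.succAbove_right_injective.mem_finset_image]
    simp [hx, mem_sup]

lemma opt_le_card_filter_notMem {k : ℕ} {G : Finset (Finset (Fin (m + 1)))}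
    (hG : IsGenerator (m + 1) k G) : opt m k ≤ #{g ∈ G | z ∉ g} :=
  card_deletePoint z G ▸ Nat.sInf_le ⟨_, hG.deletePoint z, rfl⟩

end DeletePoint

theorem stmt6_general (n k : ℕ) (hk : 1 ≤ k)
    (G : Finset (Finset (Fin n))) (hG : IsGenerator n k G)
    (hopt : G.card = opt n k) (z : Fin n)
    (hz : 2 ^ (pCeil n k - 1) ≤ (G.filter fun g => z ∈ g).card)
    (hprev : opt (n - 1) k = constr (n - 1) k) :
    (G.filter fun g => z ∈ g).card = 2 ^ (pCeil n k - 1) ∧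
      opt n k = constr n k := by
  obtain ⟨m, rfl⟩ : ∃ m, n = m + 1 := Nat.exists_eq_succ_of_ne_zero z.pos.ne'
  rw [Nat.add_sub_cancel] at hprev
  have hsplit : #{g ∈ G | z ∈ g} + #{g ∈ G | z ∉ g} = #G := card_filter_add_card_filter_not _
  have hlower := opt_le_card_filter_notMem z hG
  have hupper := opt_le_constr hk (m + 1)
  have hstep := constr_succ hk m
  omega

theorem stmt6 (n k : ℕ) (hk : 1 ≤ k) (hn : 1 ≤ n)
    (G : Finset (Finset (Fin n))) (hG : IsGenerator n k G)
    (hopt : G.card = opt n k) (z : Fin n)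
    (hz : 2 ^ (pCeil n k - 1) ≤ (G.filter fun g => z ∈ g).card)
    (hprev : opt (n - 1) k = constr (n - 1) k) :
    (G.filter fun g => z ∈ g).card = 2 ^ (pCeil n k - 1) ∧
      opt n k = constr n k :=
  stmt6_general n k hk G hG hopt z hz hprev
end

section
/- Let G be an (n,k)-generator and z ∈ [n]. Suppose G − z ⊆ P(V₁) ∪ ⋯ ∪ P(V_k) for a partition {V₁,...,V_k} of [n]∖{z} into nonempty parts. Then there exists an index i such that z sees V_i, i.e., {g ∩ V_i : g ∈ G, z ∈ g} equals the full powerset P(V_i). -/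
/-!
Suppose no `V i` is seen by `z`, and pick for every `i` a set `U i ⊆ V i` that is not a trace
`g ∩ V i` of any `g ∈ G(z)`. Decompose `X = {z} ∪ ⋃ᵢ U i` into at most `k` disjoint members of `G`.
The member `g₀` containing `z` leaves at most `k - 1` others; these avoid `z`, so each lies in a
single part, and some part `V i` meets none of them. Then `g₀ ∩ V i = X ∩ V i = U i`, a contradiction.
-/

open Function

theorem exists_forall_disjoint_of_card_lt {α ι : Type*} [Fintype ι] {V : ι → Finset α}
    (hV : Pairwise (Disjoint on V)) {T : Finset (Finset α)} (hT : ∀ g ∈ T, ∃ j, g ⊆ V j)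
    (hcard : T.card < Fintype.card ι) : ∃ i, ∀ g ∈ T, Disjoint g (V i) := by
  classical
  have : Nonempty ι := Fintype.card_pos_iff.mp (T.card.zero_le.trans_lt hcard)
  choose! f hf using hT
  obtain ⟨i, -, hi⟩ := Finset.exists_mem_notMem_of_card_lt_card
    (s := T.image f) (t := Finset.univ) (Finset.card_image_le.trans_lt hcard)
  refine ⟨i, fun g hg => (hV fun h => hi ?_).mono_left (hf g hg)⟩
  exact Finset.mem_image.mpr ⟨g, hg, h⟩

theorem Finset.sup_id_inter_eq_of_forall_ne_disjoint {α : Type*} [DecidableEq α]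
    {S : Finset (Finset α)} {g₀ W : Finset α} (hg₀ : g₀ ∈ S)
    (hS : ∀ g ∈ S, g ≠ g₀ → Disjoint g W) : S.sup id ∩ W = g₀ ∩ W := by
  ext x
  simp only [Finset.mem_inter, Finset.mem_sup, id]
  constructor
  · rintro ⟨⟨g, hgS, hxg⟩, hxW⟩
    obtain rfl | hne := eq_or_ne g g₀
    · exact ⟨hxg, hxW⟩
    · exact absurd hxW (Finset.disjoint_left.mp (hS g hgS hne) hxg)
  · rintro ⟨hxg₀, hxW⟩
    exact ⟨⟨g₀, hg₀, hxg₀⟩, hxW⟩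

theorem Finset.insert_biUnion_inter_of_subset {α ι : Type*} [DecidableEq α] [Fintype ι]
    {V U : ι → Finset α} (hV : Pairwise (Disjoint on V)) (hU : ∀ j, U j ⊆ V j) {z : α} (i : ι)
    (hz : z ∉ V i) : insert z (Finset.univ.biUnion U) ∩ V i = U i := by
  ext x
  simp only [Finset.mem_inter, Finset.mem_insert, Finset.mem_biUnion, Finset.mem_univ, true_and]
  constructor
  · rintro ⟨rfl | ⟨j, hxj⟩, hxV⟩
    · exact absurd hxV hz
    · obtain rfl | hji := eq_or_ne j i
      · exact hxj
      · exact absurd hxV (Finset.disjoint_left.mp (hV hji) (hU j hxj))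
  · exact fun hx => ⟨Or.inr ⟨i, hx⟩, hU i hx⟩

theorem stmt9_general (n k : ℕ) (G : Finset (Finset (Fin n))) (hG : IsGenerator n k G)
    (z : Fin n) (V : Fin k → Finset (Fin n))
    (hdisj : ∀ i j, i ≠ j → Disjoint (V i) (V j))
    (hcover : Finset.univ.biUnion V = Finset.univ.erase z)
    (hsub : ∀ g ∈ G, z ∉ g → ∃ i, g ⊆ V i) :
    ∃ i, ∀ U ⊆ V i, ∃ g ∈ G, z ∈ g ∧ g ∩ V i = U := by
  classical
  have hV : Pairwise (Disjoint on V) := fun i j => hdisj i j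
  have hzV : ∀ i, z ∉ V i := fun i hz =>
    Finset.notMem_erase z _ (hcover ▸ Finset.mem_biUnion.mpr ⟨i, Finset.mem_univ i, hz⟩)
  by_contra! hcon
  choose U hU hbad using hcon
  set X := insert z (Finset.univ.biUnion U)
  obtain ⟨S, hSG, hSk, hSd, hSX⟩ := hG.2 X ⟨z, Finset.mem_insert_self _ _⟩
  obtain ⟨g₀, hg₀S, hzg₀⟩ := Finset.mem_sup.mp (hSX ▸ Finset.mem_insert_self z _ : z ∈ S.sup id)
  have hrest : ∀ g ∈ S.erase g₀, ∃ j, g ⊆ V j := fun g hg =>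
    hsub g (hSG (Finset.mem_of_mem_erase hg)) fun hzg => Finset.disjoint_left.mp
      (hSd (Finset.mem_of_mem_erase hg) hg₀S (Finset.ne_of_mem_erase hg)) hzg hzg₀
  have hcard : (S.erase g₀).card < Fintype.card (Fin k) := by
    rw [Finset.card_erase_of_mem hg₀S, Fintype.card_fin]
    have := Finset.card_pos.mpr ⟨g₀, hg₀S⟩
    omega
  obtain ⟨i, hi⟩ := exists_forall_disjoint_of_card_lt hV hrest hcard
  have htrace : g₀ ∩ V i = U i := by
    rw [← Finset.sup_id_inter_eq_of_forall_ne_disjoint hg₀S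
      fun g hg hne => hi g (Finset.mem_erase.mpr ⟨hne, hg⟩), ← hSX]
    exact Finset.insert_biUnion_inter_of_subset hV hU i (hzV i)
  exact hbad i g₀ (hSG hg₀S) hzg₀ htrace

theorem stmt9 (n k : ℕ) (G : Finset (Finset (Fin n))) (hG : IsGenerator n k G)
    (z : Fin n) (V : Fin k → Finset (Fin n))
    (hne : ∀ i, (V i).Nonempty)
    (hdisj : ∀ i j, i ≠ j → Disjoint (V i) (V j))
    (hcover : Finset.univ.biUnion V = Finset.univ.erase z)
    (hsub : ∀ g ∈ G, z ∉ g → ∃ i, g ⊆ V i) :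
    ∃ i, ∀ U ⊆ V i, ∃ g ∈ G, z ∈ g ∧ g ∩ V i = U :=
  stmt9_general n k G hG z V hdisj hcover hsub
end

section
/- Let G be an (n,k)-generator, z ∈ [n], and suppose G − z ⊆ P(V₁) ∪ ⋯ ∪ P(V_k) for a partition {V₁,...,V_k} of [n]∖{z} into nonempty parts. If z sees V₁ but does not strongly see V₁, then |G(z)| ≥ 2^{|V₁|} + m − 1, where m = min_{i=2,...,k} |V_i|. -/
open Finset Function

section Counting

variable {α : Type*} [DecidableEq α]

theorem card_lt_card_of_nonempty_subset_disjoint {ι : Type*} [Fintype ι]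
    {V : ι → Finset α} (hV : Pairwise (Disjoint on V)) {S : Finset (Finset α)}
    {g : Finset α} {p : ι → Finset α} (hg : g ∈ S) (hp : ∀ i, p i ∈ S) (hpg : ∀ i, p i ≠ g)
    (hpV : ∀ i, p i ⊆ V i) (hne : ∀ i, (p i).Nonempty) : Fintype.card ι < #S := by
  have hinj : Injective p := by
    intro i j hij
    by_contra h
    obtain ⟨a, ha⟩ := hne i
    exact disjoint_left.mp (hV h) (hpV i ha) (hpV j (hij ▸ ha))
  have hg' : g ∉ univ.image p := by simpa using fun i => hpg i
  calc Fintype.card ι < #(insert g (univ.image p)) := by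
        rw [card_insert_of_notMem hg', card_image_of_injective _ hinj, card_univ]
        exact Nat.lt_succ_self _
    _ ≤ #S := card_le_card (insert_subset hg (image_subset_iff.mpr fun i _ => hp i))

theorem exists_minimal_insert_notMem {G : Finset (Finset α)} {z : α} {V : Finset α}
    (h : ¬ ∀ U ⊆ V, insert z U ∈ G) :
    ∃ U ⊆ V, insert z U ∉ G ∧ ∀ A ⊂ U, insert z A ∈ G := by
  push Not at h
  obtain ⟨U, hUV, hUG⟩ := h
  obtain ⟨U₀, hU₀U, hU₀G, hmin⟩ :=
    exists_minimal_le_of_wellFoundedLT (fun A => insert z A ∉ G) U hUG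
  refine ⟨U₀, hU₀U.trans hUV, hU₀G, fun A hA => ?_⟩
  by_contra hAG
  exact hA.not_ge (hmin hAG hA.le)

theorem two_pow_sub_two_pow_le_card_filter_not_inter_subset {G : Finset (Finset α)} {z : α}
    {V U : Finset α} (hUV : U ⊆ V) (hsees : ∀ W ⊆ V, ∃ g ∈ G, z ∈ g ∧ g ∩ V = W) :
    2 ^ #V - 2 ^ #U ≤ #((G.filter (z ∈ ·)).filter fun g => ¬ g ∩ V ⊆ U) := by
  have hsurj : Set.SurjOn (· ∩ V) ((G.filter (z ∈ ·)).filter fun g => ¬ g ∩ V ⊆ U)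
      ↑(V.powerset \ U.powerset) := by
    intro W hW
    simp only [coe_sdiff, Set.mem_sdiff, mem_coe, mem_powerset] at hW
    obtain ⟨g, hgG, hzg, rfl⟩ := hsees W hW.1
    exact ⟨g, by simp [hgG, hzg, hW.2], rfl⟩
  have := card_le_card_of_surjOn _ hsurj
  rwa [card_sdiff_of_subset (powerset_mono.mpr hUV), card_powerset, card_powerset] at this

theorem two_pow_sub_one_le_card_filter_subset_insert {G : Finset (Finset α)} {z : α}
    {V U : Finset α} (hzV : z ∉ V) (hUV : U ⊆ V) (hmin : ∀ A ⊂ U, insert z A ∈ G) :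
    2 ^ #U - 1 ≤ #(((G.filter (z ∈ ·)).filter (· ∩ V ⊆ U)).filter (· ⊆ insert z V)) := by
  have hzA : ∀ A ∈ U.ssubsets, z ∉ A := fun A hA hz =>
    hzV (hUV ((mem_ssubsets.mp hA).subset hz))
  calc 2 ^ #U - 1 = #(U.ssubsets.image (insert z)) := by
        rw [card_image_of_injOn (insert_erase_invOn.2.injOn.mono hzA), ssubsets,
          card_erase_of_mem (mem_powerset_self U), card_powerset]
    _ ≤ _ := by
        refine card_le_card fun g hg => ?_
        obtain ⟨A, hA, rfl⟩ := mem_image.mp hg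
        have hAU := (mem_ssubsets.mp hA).subset
        have : insert z A ∩ V ⊆ U := by
          rw [insert_inter_of_notMem hzV]
          exact inter_subset_left.trans hAU
        simp [hmin A (mem_ssubsets.mp hA), this, insert_subset_insert z (hAU.trans hUV)]

end Counting

namespace IsGenerator

variable {n k : ℕ} {G : Finset (Finset (Fin n))} {z : Fin n} {V : Fin k → Finset (Fin n)}
  {i₀ : Fin k} {U : Finset (Fin n)}

theorem exists_mem_subset_not_subset_insert (hG : IsGenerator n k G)
    (hV : Pairwise (Disjoint on V)) (hzV : ∀ i, z ∉ V i)
    (hsub : ∀ g ∈ G, z ∉ g → ∃ i, g ⊆ V i) (hUV : U ⊆ V i₀) (hUG : insert z U ∉ G)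
    {x : Fin k → Fin n} (hx : ∀ i ≠ i₀, x i ∈ V i) :
    ∃ g ∈ G, z ∈ g ∧ g ⊆ insert z U ∪ (univ.erase i₀).image x ∧ ¬ g ⊆ insert z (V i₀) := by
  set X := insert z U ∪ (univ.erase i₀).image x
  have hx_notMem : ∀ i ≠ i₀, x i ∉ insert z (V i₀) := fun i hi h =>
    (mem_insert.mp h).elim (fun h => hzV i (h ▸ hx i hi))
      (disjoint_left.mp (hV hi) (hx i hi))
  obtain ⟨S, hSG, hSk, hSdisj, hXS⟩ := hG.2 X ⟨z, by simp [X]⟩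
  have hpiece : ∀ a ∈ X, ∃ t ∈ S, a ∈ t := fun a ha => by
    rw [hXS] at ha
    simpa using ha
  obtain ⟨g, hgS, hzg⟩ := hpiece z (by simp [X])
  have hgX : g ⊆ X := hXS ▸ le_sup (f := id) hgS
  refine ⟨g, hSG hgS, hzg, hgX, fun hgV => ?_⟩
  have hgU : g ⊆ insert z U := fun a ha => by
    rcases mem_union.mp (hgX ha) with h | h
    · exact h
    · obtain ⟨i, hi, rfl⟩ := mem_image.mp h
      exact absurd (hgV ha) (hx_notMem i (ne_of_mem_erase hi))
  obtain ⟨u, huU, hug⟩ : ∃ u ∈ U, u ∉ g := by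
    by_contra! h
    exact hUG (subset_antisymm (insert_subset hzg h) hgU ▸ hSG hgS)
  -- every part `V i` contains a piece of the decomposition of `X` other than `g`
  set a : Fin k → Fin n := fun i => if i = i₀ then u else x i
  have ha : ∀ i, a i ∈ X ∧ a i ∉ g ∧ a i ∈ V i := by
    intro i
    by_cases hi : i = i₀
    · subst hi
      simp only [a, if_pos rfl]
      exact ⟨by simp [X, huU], hug, hUV huU⟩
    · simp only [a, if_neg hi]
      exact ⟨by simp [X, mem_image_of_mem x (mem_erase.mpr ⟨hi, mem_univ i⟩)],
        fun h => hx_notMem i hi (hgV h), hx i hi⟩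
  choose p hpS hap using fun i => hpiece (a i) (ha i).1
  have hpg : ∀ i, p i ≠ g := fun i h => (ha i).2.1 (h ▸ hap i)
  have hpV : ∀ i, p i ⊆ V i := by
    intro i
    have hzp : z ∉ p i := disjoint_left.mp (hSdisj hgS (hpS i) (hpg i).symm) hzg
    obtain ⟨j, hj⟩ := hsub (p i) (hSG (hpS i)) hzp
    obtain rfl : j = i := by
      by_contra hji
      exact disjoint_left.mp (hV hji) (hj (hap i)) (ha i).2.2
    exact hj
  have := card_lt_card_of_nonempty_subset_disjoint hV hgS hpS hpg hpV fun i => ⟨a i, hap i⟩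
  rw [Fintype.card_fin] at this
  omega

theorem le_card_filter_not_subset_insert (hG : IsGenerator n k G)
    (hV : Pairwise (Disjoint on V)) (hzV : ∀ i, z ∉ V i)
    (hsub : ∀ g ∈ G, z ∉ g → ∃ i, g ⊆ V i) (hUV : U ⊆ V i₀) (hUG : insert z U ∉ G)
    {m : ℕ} (hm : ∀ i ≠ i₀, m ≤ #(V i)) :
    m ≤ #(((G.filter (z ∈ ·)).filter (· ∩ V i₀ ⊆ U)).filter (¬ · ⊆ insert z (V i₀))) := by
  set R := ((G.filter (z ∈ ·)).filter (· ∩ V i₀ ⊆ U)).filter (¬ · ⊆ insert z (V i₀))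
  by_contra! hR
  have : Nonempty (Fin n) := ⟨z⟩
  choose! w hwg hwV using fun g (hg : g ∈ R) => not_subset.mp (mem_filter.mp hg).2
  set P := R.image w
  have hx : ∀ i, ∃ a, i ≠ i₀ → a ∈ V i ∧ a ∉ P := by
    intro i
    by_cases hi : i = i₀
    · exact ⟨z, fun h => absurd hi h⟩
    · obtain ⟨a, haV, haP⟩ :=
        exists_mem_notMem_of_card_lt_card (card_image_le.trans_lt (hR.trans_le (hm i hi)))
      exact ⟨a, fun _ => ⟨haV, haP⟩⟩
  choose x hx using hx
  obtain ⟨g, hgG, hzg, hgX, hgV⟩ :=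
    hG.exists_mem_subset_not_subset_insert hV hzV hsub hUV hUG fun i hi => (hx i hi).1
  have hgU : g ∩ V i₀ ⊆ U := by
    intro a ha
    obtain ⟨hag, haV⟩ := mem_inter.mp ha
    rcases mem_union.mp (hgX hag) with h | h
    · exact (mem_insert.mp h).resolve_left fun h => hzV i₀ (h ▸ haV)
    · obtain ⟨i, hi, rfl⟩ := mem_image.mp h
      exact absurd haV (disjoint_left.mp (hV (ne_of_mem_erase hi)) (hx i (ne_of_mem_erase hi)).1)
  have hgR : g ∈ R := by simp [R, hgG, hzg, hgU, hgV]
  rcases mem_union.mp (hgX (hwg g hgR)) with h | h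
  · exact hwV g hgR (insert_subset_insert z hUV h)
  · obtain ⟨i, hi, hwx⟩ := mem_image.mp h
    exact (hx i (ne_of_mem_erase hi)).2 (hwx ▸ mem_image_of_mem w hgR)

end IsGenerator

theorem stmt10_general (n k m : ℕ) (G : Finset (Finset (Fin n))) (hG : IsGenerator n k G)
    (z : Fin n) (V : Fin k → Finset (Fin n)) (i₀ : Fin k)
    (hdisj : ∀ i j, i ≠ j → Disjoint (V i) (V j))
    (hcover : Finset.univ.biUnion V = Finset.univ.erase z)
    (hsub : ∀ g ∈ G, z ∉ g → ∃ i, g ⊆ V i)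
    (hsees : ∀ U ⊆ V i₀, ∃ g ∈ G, z ∈ g ∧ g ∩ V i₀ = U)
    (hnstrong : ¬ ∀ U ⊆ V i₀, insert z U ∈ G)
    (hm1 : ∀ i, i ≠ i₀ → m ≤ (V i).card) :
    2 ^ (V i₀).card + m - 1 ≤ (G.filter fun g => z ∈ g).card := by
  have hzV : ∀ i, z ∉ V i := fun i hz => by
    have := mem_biUnion.mpr ⟨i, mem_univ i, hz⟩
    simp [hcover] at this
  have hV : Pairwise (Disjoint on V) := fun i j hij => hdisj i j hij
  obtain ⟨U, hUV, hUG, hmin⟩ := exists_minimal_insert_notMem hnstrong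
  have hnot := two_pow_sub_two_pow_le_card_filter_not_inter_subset hUV hsees
  have hin := two_pow_sub_one_le_card_filter_subset_insert (hzV i₀) hUV hmin
  have hout := hG.le_card_filter_not_subset_insert hV hzV hsub hUV hUG hm1
  have hsplit := card_filter_add_card_filter_not (s := G.filter (z ∈ ·)) (· ∩ V i₀ ⊆ U)
  rw [← card_filter_add_card_filter_not (· ⊆ insert z (V i₀))] at hsplit
  have hpow : 2 ^ #U ≤ 2 ^ #(V i₀) := Nat.pow_le_pow_right two_pos (card_le_card hUV)
  have := Nat.one_le_two_pow (n := #U)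
  omega

theorem stmt10 (n k m : ℕ) (G : Finset (Finset (Fin n))) (hG : IsGenerator n k G)
    (z : Fin n) (V : Fin k → Finset (Fin n)) (i₀ : Fin k)
    (hne : ∀ i, (V i).Nonempty)
    (hdisj : ∀ i j, i ≠ j → Disjoint (V i) (V j))
    (hcover : Finset.univ.biUnion V = Finset.univ.erase z)
    (hsub : ∀ g ∈ G, z ∉ g → ∃ i, g ⊆ V i)
    (hsees : ∀ U ⊆ V i₀, ∃ g ∈ G, z ∈ g ∧ g ∩ V i₀ = U)
    (hnstrong : ¬ ∀ U ⊆ V i₀, insert z U ∈ G)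
    (hm1 : ∀ i, i ≠ i₀ → m ≤ (V i).card)
    (hm2 : ∃ i, i ≠ i₀ ∧ (V i).card = m) :
    2 ^ (V i₀).card + m - 1 ≤ (G.filter fun g => z ∈ g).card :=
  stmt10_general n k m G hG z V i₀ hdisj hcover hsub hsees hnstrong hm1
end

section
/- If k < n ≤ 2k and G consists of all n singletons of [n] together with n − k pairwise disjoint subsets of [n] each of size at least 2, then G is an (n,k)-generator. -/
/-!
Given a nonempty `X ⊆ [n]`, cover it by the blocks of `D` contained in `X` together with the
singletons of the remaining points. Every other block meets the complement of `X`, and these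
blocks are disjoint, so at most `n - |X|` of them lie outside `X`; hence at least `|X| - k` blocks
lie inside `X`. Each of those replaces at least two singletons, so the cover has at most `k` sets.
-/

open Finset

namespace Finset

variable {α : Type*} [DecidableEq α]

theorem two_mul_card_le_card_sup_id {T : Finset (Finset α)}
    (hdisj : (T : Set (Finset α)).Pairwise Disjoint) (hsize : ∀ d ∈ T, 2 ≤ #d) :
    2 * #T ≤ #(T.sup id) := by
  rw [sup_eq_biUnion, card_biUnion (t := id) hdisj, mul_comm, ← smul_eq_mul, ← sum_const]
  exact sum_le_sum hsize

theorem card_filter_not_subset_le [Fintype α] {D : Finset (Finset α)}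
    (hdisj : (D : Set (Finset α)).Pairwise Disjoint) (X : Finset α) :
    #{d ∈ D | ¬d ⊆ X} ≤ #Xᶜ := by
  calc #{d ∈ D | ¬d ⊆ X} ≤ #({d ∈ D | ¬d ⊆ X}.biUnion (· \ X)) :=
        card_le_card_biUnion
          (fun _ hd _ he hde ↦ (hdisj (mem_filter.1 hd).1 (mem_filter.1 he).1 hde).mono
            sdiff_subset sdiff_subset)
          fun _ hd ↦ sdiff_nonempty.2 (mem_filter.1 hd).2
    _ ≤ #Xᶜ := card_le_card <| biUnion_subset.2 fun d _ ↦ by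
        rw [sdiff_eq_inter_compl]; exact inter_subset_right

theorem pairwise_disjoint_union_image_singleton_sdiff {T : Finset (Finset α)}
    (hdisj : (T : Set (Finset α)).Pairwise Disjoint) (X : Finset α) :
    ((T ∪ (X \ T.sup id).image singleton : Finset (Finset α)) : Set (Finset α)).Pairwise
      Disjoint := by
  rw [coe_union, coe_image, Set.pairwise_union_of_symm]
  refine ⟨hdisj, ?_, ?_⟩
  · rintro _ ⟨i, -, rfl⟩ _ ⟨j, -, rfl⟩ hij
    exact disjoint_singleton.2 fun h ↦ hij (congrArg _ h)
  · rintro d hd _ ⟨i, hi, rfl⟩ -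
    exact disjoint_singleton_right.2 fun hid ↦ (mem_sdiff.1 hi).2 (le_sup (f := id) hd hid)

theorem sup_union_image_singleton_sdiff {T : Finset (Finset α)} {X : Finset α}
    (hTX : T.sup id ⊆ X) : (T ∪ (X \ T.sup id).image singleton).sup id = X := by
  rw [sup_union, sup_image, Function.id_comp, sup_singleton_eq_self, sup_eq_union,
    union_sdiff_of_subset hTX]

theorem card_union_image_singleton_sdiff_add_card_le {T : Finset (Finset α)} {X : Finset α}
    (hdisj : (T : Set (Finset α)).Pairwise Disjoint) (hsize : ∀ d ∈ T, 2 ≤ #d)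
    (hTX : T.sup id ⊆ X) : #(T ∪ (X \ T.sup id).image singleton) + #T ≤ #X := by
  have h2T := two_mul_card_le_card_sup_id hdisj hsize
  have hcard := card_sdiff_of_subset hTX
  have hsup := card_le_card hTX
  grw [card_union_le, card_image_le]
  omega

end Finset

theorem stmt12_general (n k : ℕ)
    (D : Finset (Finset (Fin n))) (hD : D.card = n - k)
    (hsize : ∀ g ∈ D, 2 ≤ g.card)
    (hdisj : (D : Set (Finset (Fin n))).Pairwise Disjoint) :
    IsGenerator n k
      ((Finset.univ.image fun i : Fin n => ({i} : Finset (Fin n))) ∪ D) := by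
  refine ⟨fun g hg ↦ ?_, fun X _ ↦ ?_⟩
  · rcases mem_union.1 hg with hg | hg
    · obtain ⟨i, -, rfl⟩ := mem_image.1 hg
      exact singleton_nonempty i
    · exact card_pos.1 (by linarith [hsize g hg])
  set T := {d ∈ D | d ⊆ X}
  have hTD : T ⊆ D := filter_subset _ D
  have hTX : T.sup id ⊆ X := Finset.sup_le fun d hd ↦ (mem_filter.1 hd).2
  have hTdisj := hdisj.mono (coe_subset.2 hTD)
  have hsplit : #T + #{d ∈ D | ¬d ⊆ X} = #D := card_filter_add_card_filter_not _
  have hrest := card_filter_not_subset_le hdisj X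
  have hsaving := card_union_image_singleton_sdiff_add_card_le hTdisj
    (fun d hd ↦ hsize d (hTD hd)) hTX
  rw [card_compl, Fintype.card_fin] at hrest
  have hXn : #X ≤ n := X.card_le_univ.trans_eq (Fintype.card_fin n)
  refine ⟨T ∪ (X \ T.sup id).image singleton,
    union_subset (hTD.trans subset_union_right)
      ((image_subset_image (subset_univ _)).trans subset_union_left),
    by omega, pairwise_disjoint_union_image_singleton_sdiff hTdisj X,
    (sup_union_image_singleton_sdiff hTX).symm⟩

theorem stmt12 (n k : ℕ) (h1 : k < n) (h2 : n ≤ 2 * k)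
    (D : Finset (Finset (Fin n))) (hD : D.card = n - k)
    (hsize : ∀ g ∈ D, 2 ≤ g.card)
    (hdisj : (D : Set (Finset (Fin n))).Pairwise Disjoint) :
    IsGenerator n k
      ((Finset.univ.image fun i : Fin n => ({i} : Finset (Fin n))) ∪ D) :=
  stmt12_general n k D hD hsize hdisj
end

section
/- If k < n ≤ 2k, then every (n,k)-generator has size at least n + (n − k), i.e., opt(n,k) = 2n − k = constr(n,k); moreover a generator achieves this bound if and only if it consists of all singletons of [n] together with n − k pairwise disjoint sets of size at least 2. -/
/-!
Every generator contains all singletons, since `{i}` can only be a union of copies of `{i}`.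
If a set `T` meets every member of size at least two, then a `(k+1)`-subset of `[n] \ T` can
only be built from singletons, so `n ≤ k + |T|`. One point from each big member gives such a
`T`, so there are at least `n - k` big members. If two of them met at a point `x`, that point
would serve for both, giving a `T` one smaller, which is impossible when the bound is attained.
-/

open Finset

section HittingSet

variable {α : Type*} [DecidableEq α]

theorem exists_hitting_set (L : Finset (Finset α)) (hL : ∀ g ∈ L, g.Nonempty) :
    ∃ T : Finset α, #T ≤ #L ∧ ∀ g ∈ L, ¬Disjoint g T := by
  induction L using Finset.induction_on with
  | empty => exact ⟨∅, by simp⟩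
  | insert g L hgL ih =>
    obtain ⟨T, hT, hhit⟩ := ih fun h hh => hL h (mem_insert_of_mem hh)
    obtain ⟨x, hx⟩ := hL g (mem_insert_self g L)
    refine ⟨insert x T, ?_, ?_⟩
    · have := card_insert_le x T
      rw [card_insert_of_notMem hgL]
      omega
    · rintro h hh
      rcases mem_insert.mp hh with rfl | hh
      · exact not_disjoint_iff.mpr ⟨x, hx, mem_insert_self x T⟩
      · exact fun hd => hhit h hh (hd.mono_right (subset_insert x T))

theorem exists_hitting_set_of_not_disjoint {L : Finset (Finset α)} (hL : ∀ g ∈ L, g.Nonempty)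
    {a b : Finset α} (ha : a ∈ L) (hb : b ∈ L) (hab : a ≠ b) (hnd : ¬Disjoint a b) :
    ∃ T : Finset α, #T < #L ∧ ∀ g ∈ L, ¬Disjoint g T := by
  obtain ⟨x, hxa, hxb⟩ := not_disjoint_iff.mp hnd
  have hb' : b ∈ L.erase a := mem_erase.mpr ⟨hab.symm, hb⟩
  obtain ⟨T, hT, hhit⟩ := exists_hitting_set ((L.erase a).erase b)
    fun g hg => hL g (mem_of_mem_erase (mem_of_mem_erase hg))
  refine ⟨insert x T, ?_, fun g hg => ?_⟩
  · have := card_insert_le x T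
    have := card_erase_of_mem hb'
    have := card_erase_of_mem ha
    have := card_pos.mpr ⟨b, hb'⟩
    omega
  by_cases hgab : g = a ∨ g = b
  · obtain rfl | rfl := hgab
    · exact not_disjoint_iff.mpr ⟨x, hxa, mem_insert_self x T⟩
    · exact not_disjoint_iff.mpr ⟨x, hxb, mem_insert_self x T⟩
  · rw [not_or] at hgab
    have hg' : g ∈ (L.erase a).erase b := mem_erase.mpr ⟨hgab.2, mem_erase.mpr ⟨hgab.1, hg⟩⟩
    exact fun hd => hhit g hg' (hd.mono_right (subset_insert x T))

end HittingSet

theorem card_univ_image_singleton_union {α : Type*} [Fintype α] [DecidableEq α]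
    {D : Finset (Finset α)} (hD : ∀ g ∈ D, 2 ≤ #g) :
    #((univ.image fun i : α => ({i} : Finset α)) ∪ D) = Fintype.card α + #D := by
  have hdisj : Disjoint (univ.image fun i : α => ({i} : Finset α)) D := by
    refine disjoint_left.mpr fun g hg hgD => ?_
    obtain ⟨i, -, rfl⟩ := mem_image.mp hg
    simpa using hD _ hgD
  rw [card_union_of_disjoint hdisj, card_image_of_injective _ singleton_injective, card_univ]

def bigMembers {α : Type*} (G : Finset (Finset α)) : Finset (Finset α) :=
  G.filter fun g => 2 ≤ #g

theorem mem_bigMembers {α : Type*} {G : Finset (Finset α)} {g : Finset α} :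
    g ∈ bigMembers G ↔ g ∈ G ∧ 2 ≤ #g :=
  mem_filter

theorem nonempty_of_mem_bigMembers {α : Type*} {G : Finset (Finset α)} {g : Finset α}
    (hg : g ∈ bigMembers G) : g.Nonempty :=
  card_pos.mp (by have := (mem_bigMembers.mp hg).2; omega)

namespace IsGenerator

variable {n k : ℕ} {G : Finset (Finset (Fin n))}

theorem singleton_mem (hG : IsGenerator n k G) (i : Fin n) : {i} ∈ G := by
  obtain ⟨S, hSG, -, -, hS⟩ := hG.2 {i} (singleton_nonempty i)
  obtain ⟨s, hs⟩ : S.Nonempty := by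
    rw [nonempty_iff_ne_empty]
    rintro rfl
    simp at hS
  have hsi : s = {i} :=
    (hG.1 s (hSG hs)).subset_singleton_iff.mp (hS ▸ le_sup (f := id) hs)
  exact hsi ▸ hSG hs

theorem eq_univ_image_singleton_union_bigMembers (hG : IsGenerator n k G) :
    G = (univ.image fun i : Fin n => ({i} : Finset (Fin n))) ∪ bigMembers G := by
  ext g
  simp only [mem_bigMembers, mem_union, mem_image, mem_univ, true_and]
  constructor
  · intro hg
    by_cases h2 : 2 ≤ #g
    · exact Or.inr ⟨hg, h2⟩
    · have := (hG.1 g hg).card_pos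
      obtain ⟨i, rfl⟩ := card_eq_one.mp (show #g = 1 by omega)
      exact Or.inl ⟨i, rfl⟩
  · rintro (⟨i, rfl⟩ | ⟨hg, -⟩)
    · exact hG.singleton_mem i
    · exact hg

theorem card_eq_add_card_bigMembers (hG : IsGenerator n k G) : #G = n + #(bigMembers G) := by
  conv_lhs => rw [hG.eq_univ_image_singleton_union_bigMembers]
  rw [card_univ_image_singleton_union fun g hg => (mem_bigMembers.mp hg).2, Fintype.card_fin]

theorem le_add_card_of_forall_not_disjoint (hG : IsGenerator n k G) {T : Finset (Fin n)}
    (hT : ∀ g ∈ bigMembers G, ¬Disjoint g T) : n ≤ k + #T := by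
  by_contra! h
  obtain ⟨X, hXT, hX⟩ := exists_subset_card_eq (s := Tᶜ) (n := k + 1)
    (by rw [card_compl, Fintype.card_fin]; omega)
  obtain ⟨S, hSG, hSk, -, rfl⟩ := hG.2 X (card_pos.mp (by omega))
  have hsmall : ∀ s ∈ S, #s ≤ 1 := fun s hs => by
    by_contra! h2
    exact hT s (mem_bigMembers.mpr ⟨hSG hs, h2⟩)
      (subset_compl_iff_disjoint_right.mp ((le_sup (f := id) hs).trans hXT))
  have hcard : #(S.sup id) ≤ #S := calc
    #(S.sup id) ≤ ∑ s ∈ S, #s := by rw [sup_eq_biUnion]; exact card_biUnion_le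
    _ ≤ ∑ _s ∈ S, 1 := sum_le_sum hsmall
    _ = #S := by simp
  omega

theorem sub_le_card_bigMembers (hG : IsGenerator n k G) : n - k ≤ #(bigMembers G) := by
  obtain ⟨T, hT, hhit⟩ := exists_hitting_set (bigMembers G) fun _ => nonempty_of_mem_bigMembers
  have := hG.le_add_card_of_forall_not_disjoint hhit
  omega

theorem pairwise_disjoint_bigMembers (hG : IsGenerator n k G) (h : #(bigMembers G) ≤ n - k) :
    (bigMembers G : Set (Finset (Fin n))).Pairwise Disjoint := by
  intro a ha b hb hab
  by_contra hnd
  obtain ⟨T, hT, hhit⟩ := exists_hitting_set_of_not_disjoint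
    (fun _ => nonempty_of_mem_bigMembers) ha hb hab hnd
  have := hG.le_add_card_of_forall_not_disjoint hhit
  omega

end IsGenerator

theorem stmt13_general (n k : ℕ) (h1 : k < n) :
    (∀ G : Finset (Finset (Fin n)), IsGenerator n k G → 2 * n - k ≤ G.card) ∧
    (∀ G : Finset (Finset (Fin n)), IsGenerator n k G →
      (G.card = 2 * n - k ↔
        ∃ D : Finset (Finset (Fin n)), D.card = n - k ∧
          (∀ g ∈ D, 2 ≤ g.card) ∧
          (D : Set (Finset (Fin n))).Pairwise Disjoint ∧
          G = (Finset.univ.image fun i : Fin n => ({i} : Finset (Fin n))) ∪ D)) := by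
  refine ⟨fun G hG => ?_, fun G hG => ⟨fun hcard => ?_, ?_⟩⟩
  · have := hG.card_eq_add_card_bigMembers
    have := hG.sub_le_card_bigMembers
    omega
  · have hbig : #(bigMembers G) = n - k := by
      have := hG.card_eq_add_card_bigMembers
      omega
    exact ⟨bigMembers G, hbig, fun g hg => (mem_bigMembers.mp hg).2,
      hG.pairwise_disjoint_bigMembers hbig.le, hG.eq_univ_image_singleton_union_bigMembers⟩
  · rintro ⟨D, hD, hD2, -, rfl⟩
    rw [card_univ_image_singleton_union hD2, Fintype.card_fin, hD]
    omega

theorem stmt13 (n k : ℕ) (h1 : k < n) (h2 : n ≤ 2 * k) :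
    (∀ G : Finset (Finset (Fin n)), IsGenerator n k G → 2 * n - k ≤ G.card) ∧
    (∀ G : Finset (Finset (Fin n)), IsGenerator n k G →
      (G.card = 2 * n - k ↔
        ∃ D : Finset (Finset (Fin n)), D.card = n - k ∧
          (∀ g ∈ D, 2 ≤ g.card) ∧
          (D : Set (Finset (Fin n))).Pairwise Disjoint ∧
          G = (Finset.univ.image fun i : Fin n => ({i} : Finset (Fin n))) ∪ D)) :=
  stmt13_general n k h1
end

section
/- For every (n,2)-generator G and every z ∈ [n], we have |G(z)| · (|G − z| + 1) ≥ 2^{n-1}, where G(z) = {g ∈ G : z ∈ g} and G − z = {g ∈ G : z ∉ g}. -/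
/-!
Every set `X ∋ z` is a disjoint union of at most two members of `G`, exactly one of which
contains `z`. Hence `X = g ∪ h` with `g ∈ G(z)` and `h ∈ (G - z) ∪ {∅}`, so the union map
from `G(z) × ((G - z) ∪ {∅})` hits all `2 ^ (n - 1)` sets containing `z`.
-/

open Finset

namespace Finset

variable {α : Type*} [DecidableEq α]

theorem card_filter_mem_univ [Fintype α] (a : α) :
    #{s : Finset α | a ∈ s} = 2 ^ (Fintype.card α - 1) := by
  rw [← card_univ, ← card_erase_of_mem (mem_univ a), ← card_powerset]
  refine card_nbij' (·.erase a) (insert a) ?_ ?_ ?_ ?_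
  · intro s _
    simp
  · intro s _
    simp
  · intro s hs
    exact insert_erase (mem_filter.mp hs).2
  · intro s hs
    exact erase_insert fun has => by simpa using mem_powerset.mp hs has

theorem exists_sup_eq_union_of_card_le_two {S : Finset (Finset α)} {a : α} (hS : #S ≤ 2)
    (hdisj : (S : Set (Finset α)).Pairwise Disjoint) (ha : a ∈ S.sup id) :
    ∃ g ∈ S.filter (a ∈ ·), ∃ h ∈ insert ∅ (S.filter (a ∉ ·)), S.sup id = g ∪ h := by
  obtain ⟨g, hgS, hag⟩ := mem_sup.mp ha
  have hsup : S.sup id = g ∪ (S.erase g).sup id := by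
    conv_lhs => rw [← insert_erase hgS]
    exact sup_insert
  refine ⟨g, mem_filter.mpr ⟨hgS, hag⟩, (S.erase g).sup id, ?_, hsup⟩
  rcases (S.erase g).eq_empty_or_nonempty with hempty | ⟨h, hh⟩
  · simp [hempty]
  have hsingle : S.erase g = {h} :=
    eq_singleton_iff_unique_mem.mpr ⟨hh, fun k hk => card_le_one.mp
      (by rw [card_erase_of_mem hgS]; omega) k hk h hh⟩
  obtain ⟨hhg, hhS⟩ := mem_erase.mp hh
  have hah : a ∉ h := disjoint_left.mp (hdisj hgS hhS hhg.symm) hag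
  simp [hsingle, hhS, hah]

end Finset

theorem IsGenerator.exists_eq_union {n : ℕ} {G : Finset (Finset (Fin n))} (hG : IsGenerator n 2 G)
    {z : Fin n} {X : Finset (Fin n)} (hz : z ∈ X) :
    ∃ g ∈ G.filter (z ∈ ·), ∃ h ∈ insert ∅ (G.filter (z ∉ ·)), X = g ∪ h := by
  obtain ⟨S, hSG, hScard, hdisj, rfl⟩ := hG.2 X ⟨z, hz⟩
  obtain ⟨g, hg, h, hh, hX⟩ := exists_sup_eq_union_of_card_le_two hScard hdisj hz
  exact ⟨g, filter_subset_filter _ hSG hg, h,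
    insert_subset_insert _ (filter_subset_filter _ hSG) hh, hX⟩

theorem stmt16 (n : ℕ) (G : Finset (Finset (Fin n))) (hG : IsGenerator n 2 G)
    (z : Fin n) :
    2 ^ (n - 1) ≤
      (G.filter fun g => z ∈ g).card * ((G.filter fun g => z ∉ g).card + 1) := by
  have hcover : ({X | z ∈ X} : Finset (Finset (Fin n))) ⊆
      ((G.filter (z ∈ ·)) ×ˢ insert ∅ (G.filter (z ∉ ·))).image fun p => p.1 ∪ p.2 := by
    intro X hX
    obtain ⟨g, hg, h, hh, rfl⟩ := hG.exists_eq_union (mem_filter.mp hX).2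
    exact mem_image.mpr ⟨(g, h), mem_product.mpr ⟨hg, hh⟩, rfl⟩
  calc 2 ^ (n - 1) = #{X : Finset (Fin n) | z ∈ X} := by
        rw [card_filter_mem_univ, Fintype.card_fin]
    _ ≤ #((G.filter (z ∈ ·)) ×ˢ insert ∅ (G.filter (z ∉ ·))) :=
        (card_le_card hcover).trans card_image_le
    _ ≤ _ := by
        rw [card_product]
        exact Nat.mul_le_mul_left _ (card_insert_le _ _)
end

section
/- The minimum size opt(n,2) of an (n,2)-generator satisfies opt(n,2) ≥ 2·2^{(n-1)/2} − 1 (with real exponent), and consequently constr(n,2) ≤ (3/2)·opt(n,2) for all n ≥ 1. -/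
open Finset

namespace IsGenerator

variable {n k : ℕ} {G : Finset (Finset (Fin n))}

/-- `S ↦ ⋃ S` maps the subfamilies of `G` of size at most `k` onto all subsets of `[n]`
(the empty one being the image of `S = ∅`). -/
theorem two_pow_le_sum_choose (hG : IsGenerator n k G) :
    2 ^ n ≤ ∑ i ∈ range (k + 1), (#G).choose i := by
  let small := (range (k + 1)).disjiUnion (powersetCard · G)
    (G.pairwise_disjoint_powersetCard.set_pairwise _)
  have mem_small {S} (hSG : S ⊆ G) (hSk : #S ≤ k) : S ∈ small :=
    mem_disjiUnion.2 ⟨#S, mem_range.2 (Nat.lt_succ_of_le hSk), mem_powersetCard.2 ⟨hSG, rfl⟩⟩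
  have hsurj : Set.SurjOn (fun S : Finset (Finset (Fin n)) ↦ S.sup id) small
      (univ : Finset (Finset (Fin n))) := by
    intro X _
    obtain rfl | hX := X.eq_empty_or_nonempty
    · exact ⟨∅, mem_small (empty_subset G) (Nat.zero_le k), rfl⟩
    obtain ⟨S, hSG, hSk, -, rfl⟩ := hG.2 X hX
    exact ⟨S, mem_small hSG hSk, rfl⟩
  calc 2 ^ n = #(univ : Finset (Finset (Fin n))) := by simp
    _ ≤ #small := card_le_card_of_surjOn _ hsurj
    _ = ∑ i ∈ range (k + 1), (#G).choose i :=
      (card_disjiUnion _ _ _).trans (by simp only [card_powersetCard])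

end IsGenerator

theorem isGenerator_univ_erase_empty {n k : ℕ} (hk : 1 ≤ k) :
    IsGenerator n k (univ.erase ∅) := by
  refine ⟨fun g hg ↦ nonempty_iff_ne_empty.2 (ne_of_mem_erase hg), fun X hX ↦ ?_⟩
  refine ⟨{X}, ?_, by simpa using hk, by simp, by simp⟩
  simpa using hX.ne_empty

theorem exists_isGenerator_card_eq_opt {n k : ℕ} (hk : 1 ≤ k) :
    ∃ G, IsGenerator n k G ∧ #G = opt n k := by
  have hne : {m | ∃ G : Finset (Finset (Fin n)), IsGenerator n k G ∧ #G = m}.Nonempty :=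
    ⟨_, _, isGenerator_univ_erase_empty hk, rfl⟩
  exact Nat.sInf_mem hne

theorem two_pow_succ_le_sq_of_two_pow_le_sum_choose {n m : ℕ} (hn : 1 ≤ n)
    (h : 2 ^ n ≤ ∑ i ∈ range 3, m.choose i) : 2 ^ (n + 1) ≤ (m + 1) ^ 2 := by
  simp only [sum_range_succ, range_zero, sum_empty, Nat.choose_zero_right,
    Nat.choose_one_right] at h
  have h2 : 2 ≤ 2 ^ n := Nat.le_self_pow (by omega) 2
  have hchoose : 2 * m.choose 2 + m = m * m := by
    rw [Nat.choose_two_right, Nat.mul_div_cancel' (Nat.even_mul_pred_self m).two_dvd]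
    cases m <;> simp [Nat.mul_succ]
  have hm : 1 ≤ m := Nat.pos_of_ne_zero (by rintro rfl; simp at h; omega)
  rw [pow_succ]
  nlinarith

theorem two_pow_succ_le_opt_two_add_one_sq {n : ℕ} (hn : 1 ≤ n) :
    2 ^ (n + 1) ≤ (opt n 2 + 1) ^ 2 := by
  obtain ⟨G, hG, hcard⟩ := exists_isGenerator_card_eq_opt (n := n) (k := 2) one_le_two
  exact hcard ▸ two_pow_succ_le_sq_of_two_pow_le_sum_choose hn hG.two_pow_le_sum_choose

theorem sq_two_mul_two_rpow (n : ℕ) :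
    (2 * (2 : ℝ) ^ (((n : ℝ) - 1) / 2)) ^ 2 = 2 ^ (n + 1) := by
  rw [mul_comm, ← Real.rpow_add_one two_ne_zero, ← Real.rpow_mul_natCast zero_le_two,
    ← Real.rpow_natCast]
  congr 1
  push_cast
  ring

theorem constr_two_mul_two (q : ℕ) : constr (2 * q) 2 = 2 * (2 ^ q - 1) := by
  have hp : pCeil (2 * q) 2 = q := by unfold pCeil; omega
  simp [constr, hp, mul_comm q 2]

theorem constr_two_mul_add_one_two (q : ℕ) :
    constr (2 * q + 1) 2 = (2 ^ q - 1) + (2 ^ (q + 1) - 1) := by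
  have hp : pCeil (2 * q + 1) 2 = q + 1 := by unfold pCeil; omega
  have hr : (q + 1) * 2 - (2 * q + 1) = 1 := by omega
  simp [constr, hp, hr]

theorem constr_two_le (n : ℕ) :
    (constr n 2 : ℝ) ≤ 3 / 2 * (2 * (2 : ℝ) ^ (((n : ℝ) - 1) / 2) - 1) := by
  set x : ℝ := (2 : ℝ) ^ (((n : ℝ) - 1) / 2) with hx
  have hsq : (2 * x) ^ 2 = 2 ^ (n + 1) := sq_two_mul_two_rpow n
  have hx0 : 0 ≤ x := by positivity
  obtain ⟨q, rfl | rfl⟩ := Nat.even_or_odd' n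
  · have hle : 2 * (2 : ℝ) ^ q ≤ 3 * x := by
      refine le_of_pow_le_pow_left₀ two_ne_zero (by positivity) ?_
      have h4q : (2 : ℝ) ^ (2 * q + 1) = 2 * (2 ^ q) ^ 2 := by ring
      nlinarith
    rw [constr_two_mul_two, Nat.cast_mul, Nat.cast_sub Nat.one_le_two_pow]
    push_cast
    linarith
  · have hxq : x = 2 ^ q := by
      rw [hx, ← Real.rpow_natCast]
      congr 1
      push_cast
      ring
    rw [constr_two_mul_add_one_two, Nat.cast_add, Nat.cast_sub Nat.one_le_two_pow,
      Nat.cast_sub Nat.one_le_two_pow, hxq]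
    push_cast
    linarith [pow_succ (2 : ℝ) q]

theorem two_mul_two_rpow_sub_one_le_opt_two {n : ℕ} (hn : 1 ≤ n) :
    2 * (2 : ℝ) ^ (((n : ℝ) - 1) / 2) - 1 ≤ opt n 2 := by
  have h : ((2 ^ (n + 1) : ℕ) : ℝ) ≤ ((opt n 2 + 1) ^ 2 : ℕ) :=
    Nat.cast_le.2 (two_pow_succ_le_opt_two_add_one_sq hn)
  push_cast at h
  rw [← sq_two_mul_two_rpow] at h
  have := le_of_pow_le_pow_left₀ two_ne_zero (by positivity) h
  linarith

theorem stmt17 (n : ℕ) (hn : 1 ≤ n) :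
    2 * (2 : ℝ) ^ (((n : ℝ) - 1) / 2) - 1 ≤ (opt n 2 : ℝ) ∧
    (constr n 2 : ℝ) ≤ 3 / 2 * (opt n 2 : ℝ) := by
  have hopt := two_mul_two_rpow_sub_one_le_opt_two hn
  exact ⟨hopt, (constr_two_le n).trans (by linarith)⟩
end

section
/- If G is an (n,k)-generator and S ⊆ [n] with |S| = k such that every member of G intersects S in at most one element, then ∏_{s ∈ S} |G(s)| ≥ 2^{n-k}, and hence ∑_{s ∈ S} |G(s)| ≥ k·2^{(n-k)/k}. -/
open Finset

section Cover

variable {α : Type*} [DecidableEq α] {G : Finset (Finset α)} {S : Finset α}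

theorem exists_mem_pi_sup_eq_sup_of_card_le (hmeet : ∀ g ∈ G, #(g ∩ S) ≤ 1)
    {𝒮 : Finset (Finset α)} (h𝒮G : 𝒮 ⊆ G) (h𝒮card : #𝒮 ≤ #S) (hS : S ⊆ 𝒮.sup id) :
    ∃ f ∈ S.pi fun s => G.filter fun g => s ∈ g,
      S.attach.sup (fun s => f s.1 s.2) = 𝒮.sup id := by
  have hcover : ∀ s ∈ S, ∃ g ∈ 𝒮, s ∈ g := fun s hs => by simpa using mem_sup.mp (hS hs)
  choose f hf𝒮 hsf using hcover
  have hinj : Function.Injective fun s : S => f s.1 s.2 := by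
    rintro ⟨s, hs⟩ ⟨t, ht⟩ (hst : f s hs = f t ht)
    have hs' : s ∈ f t ht ∩ S := mem_inter.mpr ⟨hst ▸ hsf s hs, hs⟩
    have ht' : t ∈ f t ht ∩ S := mem_inter.mpr ⟨hsf t ht, ht⟩
    exact Subtype.ext (card_le_one.mp (hmeet _ (h𝒮G (hf𝒮 t ht))) s hs' t ht')
  have himage : S.attach.image (fun s => f s.1 s.2) = 𝒮 := by
    refine eq_of_subset_of_card_le (image_subset_iff.mpr fun s _ => hf𝒮 s.1 s.2) ?_
    rwa [card_image_of_injective _ hinj, card_attach]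
  refine ⟨f, mem_pi.mpr fun s hs => mem_filter.mpr ⟨h𝒮G (hf𝒮 s hs), hsf s hs⟩, ?_⟩
  rw [← himage, sup_image]
  rfl

theorem two_pow_card_compl_le_prod_card_filter_mem [Fintype α]
    (hmeet : ∀ g ∈ G, #(g ∩ S) ≤ 1)
    (hcover : ∀ X, S ⊆ X → ∃ 𝒮 ⊆ G, #𝒮 ≤ #S ∧ X = 𝒮.sup id) :
    2 ^ #Sᶜ ≤ ∏ s ∈ S, #(G.filter fun g => s ∈ g) := by
  rw [← card_powerset, ← card_pi]
  refine card_le_card_of_surjOn (fun f => S.attach.sup (fun s => f s.1 s.2) \ S) ?_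
  intro T hT
  obtain ⟨𝒮, h𝒮G, h𝒮card, hunion⟩ := hcover (S ∪ T) subset_union_left
  obtain ⟨f, hf, hsup⟩ :=
    exists_mem_pi_sup_eq_sup_of_card_le hmeet h𝒮G h𝒮card (hunion ▸ subset_union_left)
  refine ⟨f, hf, ?_⟩
  have hdisj : Disjoint S T := disjoint_comm.mp (subset_compl_iff_disjoint_right.mp
    (mem_powerset.mp hT))
  simp only [hsup, ← hunion, union_sdiff_cancel_left hdisj]

end Cover

theorem Real.card_mul_prod_rpow_inv_card_le_sum {ι : Type*} (s : Finset ι) {z : ι → ℝ}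
    (hs : s.Nonempty) (hz : ∀ i ∈ s, 0 ≤ z i) :
    #s * (∏ i ∈ s, z i) ^ (#s : ℝ)⁻¹ ≤ ∑ i ∈ s, z i := by
  have hcard : (0 : ℝ) < #s := by exact_mod_cast hs.card_pos
  have := Real.geom_mean_le_arith_mean s (fun _ => 1) z (fun _ _ => zero_le_one)
    (by simpa using hcard) hz
  simp only [Real.rpow_one, sum_const, nsmul_eq_mul, mul_one, one_mul] at this
  rwa [le_div_iff₀ hcard, mul_comm] at this

theorem stmt18 (n k : ℕ) (hk : 1 ≤ k)
    (G : Finset (Finset (Fin n))) (hG : IsGenerator n k G)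
    (S : Finset (Fin n)) (hS : S.card = k)
    (hmeet : ∀ g ∈ G, (g ∩ S).card ≤ 1) :
    2 ^ (n - k) ≤ ∏ s ∈ S, (G.filter fun g => s ∈ g).card ∧
    (k : ℝ) * 2 ^ (((n : ℝ) - k) / k) ≤
      ∑ s ∈ S, ((G.filter fun g => s ∈ g).card : ℝ) := by
  have hSne : S.Nonempty := card_pos.mp (by omega)
  have hkn : k ≤ n := hS ▸ card_le_univ S |>.trans_eq (Fintype.card_fin n)
  have hprod : 2 ^ (n - k) ≤ ∏ s ∈ S, (G.filter fun g => s ∈ g).card := by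
    have := two_pow_card_compl_le_prod_card_filter_mem hmeet fun X hX =>
      let ⟨𝒮, h𝒮G, h𝒮card, _, hX𝒮⟩ := hG.2 X (hSne.mono hX)
      ⟨𝒮, h𝒮G, hS ▸ h𝒮card, hX𝒮⟩
    rwa [card_compl, Fintype.card_fin, hS] at this
  refine ⟨hprod, ?_⟩
  calc (k : ℝ) * 2 ^ (((n : ℝ) - k) / k) = k * ((2 : ℝ) ^ (n - k)) ^ (k : ℝ)⁻¹ := by
        rw [← Real.rpow_natCast, ← Real.rpow_mul zero_le_two, Nat.cast_sub hkn, div_eq_mul_inv]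
    _ ≤ k * (∏ s ∈ S, ((G.filter fun g => s ∈ g).card : ℝ)) ^ (k : ℝ)⁻¹ := by
        gcongr
        exact_mod_cast hprod
    _ ≤ ∑ s ∈ S, ((G.filter fun g => s ∈ g).card : ℝ) :=
        hS ▸ Real.card_mul_prod_rpow_inv_card_le_sum S hSne fun _ _ => Nat.cast_nonneg _
end
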